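/- Let n ≥ 1, τ > 0, and let A, B, H(λ,K) be as in the context. For every K ∈ ℝ^{1×n}, λ ∈ ℝ, and z ∈ ℂ, det(zI_n − H(λ,K)) = z^n + Σ_{j=1}^{n} b_j(λ) z^{n−j}, where b_j(λ) = λ · Σ_{p=1}^{j} (−1)^{j−p} τ^p K_{n+1−p} C(n−p, n−j) + (−1)^j C(n, n−j), and C(a,b) denotes the binomial coefficient (equal to 0 if b < 0 or b > a). -/

import Mathlib

open Matrix

/-- The n×n system matrix `A`: ones on the diagonal, `τ` on the superdiagonal. -/
noncomputable def Amat (n : ℕ) (τ : ℝ) : Matrix (Fin n) (Fin n) ℝ :=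
  Matrix.of fun i j => if (j : ℕ) = (i : ℕ) then 1 else if (j : ℕ) = (i : ℕ) + 1 then τ else 0

/-- The n×1 input matrix `B`: last entry `τ`, all other entries `0`. -/
noncomputable def Bmat (n : ℕ) (τ : ℝ) : Matrix (Fin n) (Fin 1) ℝ :=
  Matrix.of fun i _ => if (i : ℕ) = n - 1 then τ else 0

/-- `H(λ, K) = A - λ B K`. -/
noncomputable def Hmat (n : ℕ) (τ : ℝ) (lam : ℝ) (K : Matrix (Fin 1) (Fin n) ℝ) :
    Matrix (Fin n) (Fin n) ℝ :=
  Amat n τ - lam • (Bmat n τ * K)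

/-!
`zI - H(λ, K)` is `(z - 1) I - τ N` (with `N` the upper shift) plus the row `λ τ K` added to the
last row. Expanding along the first column gives `det = (z - 1) det' + c₀ τ^(n-1)`, hence
`det = (z - 1)^n + ∑ᵢ cᵢ τ^(n-1-i) (z - 1)^i`; expanding the powers of `z - 1` binomially and
collecting the coefficient of `z^(n-1-j)` yields `b_j`.
-/

open Finset

section

variable {R : Type*} [CommRing R]

def bidiagonalAddLastRow {n : ℕ} (a t : R) (c : Fin n → R) : Matrix (Fin n) (Fin n) R :=
  of fun i j => (if (j : ℕ) = i then a else if (j : ℕ) = i + 1 then -t else 0)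
    + if (i : ℕ) = n - 1 then c j else 0

section bidiagonalAddLastRow

variable {m : ℕ} (a t : R)

theorem bidiagonalAddLastRow_submatrix_succ_succ (c : Fin (m + 2) → R) :
    (bidiagonalAddLastRow a t c).submatrix Fin.succ Fin.succ
      = bidiagonalAddLastRow a t (c ∘ Fin.succ) := by
  ext i j
  simp [bidiagonalAddLastRow, Fin.val_succ]

theorem det_bidiagonalAddLastRow_submatrix_castSucc_succ (c : Fin (m + 2) → R) :
    ((bidiagonalAddLastRow a t c).submatrix Fin.castSucc Fin.succ).det = (-t) ^ (m + 1) := by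
  rw [det_of_isLowerTriangular]
  · have (i : Fin (m + 1)) : (i : ℕ) ≠ m + 1 := by omega
    simp [bidiagonalAddLastRow, this]
  · intro i j hij
    have hij : (i : ℕ) < j := hij
    simp [bidiagonalAddLastRow, show (j : ℕ) + 1 ≠ i by omega, show (j : ℕ) ≠ i by omega,
      show (i : ℕ) ≠ m + 1 by omega]

end bidiagonalAddLastRow

theorem det_bidiagonalAddLastRow (a t : R) :
    ∀ {n : ℕ} (c : Fin n → R),
      (bidiagonalAddLastRow a t c).det = a ^ n + ∑ j, c j * t ^ (n - 1 - j) * a ^ (j : ℕ)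
  | 0, c => by simp
  | 1, c => by simp [bidiagonalAddLastRow]
  | m + 2, c => by
    have hM00 : bidiagonalAddLastRow a t c 0 0 = a := by simp [bidiagonalAddLastRow]
    have hMlast0 : bidiagonalAddLastRow a t c (Fin.last (m + 1)) 0 = c 0 := by
      simp [bidiagonalAddLastRow]
    have hM0 (i : Fin m) : bidiagonalAddLastRow a t c i.castSucc.succ 0 = 0 := by
      simp [bidiagonalAddLastRow, i.isLt.ne]
    rw [det_succ_column_zero, Fin.sum_univ_succ, Fin.sum_univ_castSucc]
    simp only [hM00, hM0, Fin.succ_last, hMlast0, Fin.succAbove_zero, Fin.succAbove_last,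
      bidiagonalAddLastRow_submatrix_succ_succ, det_bidiagonalAddLastRow,
      det_bidiagonalAddLastRow_submatrix_castSucc_succ, zero_mul, mul_zero, sum_const_zero]
    rw [Fin.sum_univ_succ (n := m + 1)]
    simp only [Function.comp_apply, Fin.val_zero, Fin.val_succ, Fin.val_last]
    have hsign : (-1 : R) ^ (m + 1) * (-t) ^ (m + 1) = t ^ (m + 1) := by
      rw [← mul_pow, neg_one_mul, neg_neg]
    have hsum : ∑ x : Fin (m + 1), c x.succ * t ^ (m + 2 - 1 - (x + 1)) * a ^ ((x : ℕ) + 1)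
        = a * ∑ x : Fin (m + 1), c x.succ * t ^ (m + 1 - 1 - x) * a ^ (x : ℕ) := by
      rw [mul_sum]
      refine sum_congr rfl fun x _ => ?_
      rw [show m + 2 - 1 - (x + 1) = m + 1 - 1 - x by omega]
      ring
    rw [hsum, Nat.succ_eq_add_one, show m + 2 - 1 - 0 = m + 1 from rfl]
    linear_combination c 0 * hsign

theorem sub_one_pow_eq_sum_range {N L : ℕ} (h : N < L) (z : R) :
    (z - 1) ^ N = ∑ m ∈ range L, z ^ m * (-1) ^ (N - m) * N.choose m := by
  rw [sub_eq_add_neg, add_pow]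
  refine sum_subset (fun m hm => by simp only [mem_range] at hm ⊢; omega) fun m _ hm => ?_
  rw [Nat.choose_eq_zero_of_lt (by simpa using hm), Nat.cast_zero, mul_zero]

theorem sum_mul_sub_one_pow (n : ℕ) (f : ℕ → R) (z : R) :
    ∑ i ∈ range n, f i * (z - 1) ^ i
      = ∑ m ∈ range n, (∑ i ∈ range n, f i * (-1) ^ (i - m) * i.choose m) * z ^ m := by
  simp_rw [sum_mul]
  rw [sum_comm]
  refine sum_congr rfl fun i hi => ?_
  rw [sub_one_pow_eq_sum_range (mem_range.1 hi), mul_sum]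
  exact sum_congr rfl fun m _ => by ring

theorem pow_add_sum_range_eq_sub_one_pow (n : ℕ) (z : R) :
    z ^ n + ∑ j ∈ range n, (-1) ^ (j + 1) * (n.choose (n - 1 - j) : R) * z ^ (n - 1 - j)
      = (z - 1) ^ n := by
  rw [sub_one_pow_eq_sum_range n.lt_succ_self, sum_range_succ, Nat.sub_self, pow_zero,
    Nat.choose_self, Nat.cast_one, mul_one, mul_one, add_comm,
    ← sum_range_reflect (fun m => z ^ m * (-1) ^ (n - m) * (n.choose m : R))]
  refine congrArg (· + _) (sum_congr rfl fun j hj => ?_)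
  rw [show n - (n - 1 - j) = j + 1 by simp only [mem_range] at hj; omega]
  ring

theorem sum_mul_pow_mul_sub_one_pow (n : ℕ) (k : ℕ → R) (t z : R) :
    ∑ i ∈ range n, k i * t ^ (n - 1 - i) * (z - 1) ^ i
      = ∑ j ∈ range n, (∑ p ∈ range (j + 1),
          (-1) ^ (j - p) * t ^ p * k (n - 1 - p) * ((n - 1 - p).choose (n - 1 - j) : R))
            * z ^ (n - 1 - j) := by
  rw [sum_mul_sub_one_pow, ← sum_range_reflect _ n]
  refine sum_congr rfl fun j hj => congrArg (· * _) ?_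
  have hj : j < n := mem_range.1 hj
  rw [← sum_range_reflect _ n, ← sum_subset (range_subset_range.2 (by omega : j + 1 ≤ n))]
  · refine sum_congr rfl fun p hp => ?_
    have hp : p ≤ j := Nat.lt_succ_iff.1 (mem_range.1 hp)
    rw [show n - 1 - (n - 1 - p) = p by omega, show n - 1 - p - (n - 1 - j) = j - p by omega]
    ring
  · intro p hp hpj
    have hp : p < n := mem_range.1 hp
    have hpj : j < p := by simpa using hpj
    rw [Nat.choose_eq_zero_of_lt (by omega : n - 1 - p < n - 1 - j), Nat.cast_zero, mul_zero]

end

theorem smul_one_sub_map_Hmat (n : ℕ) (τ lam : ℝ) (K : Matrix (Fin 1) (Fin n) ℝ) (z : ℂ) :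
    z • (1 : Matrix (Fin n) (Fin n) ℂ) - (Hmat n τ lam K).map (Complex.ofReal ·)
      = bidiagonalAddLastRow (z - 1) (τ : ℂ) fun j => (lam * τ * K 0 j : ℝ) := by
  ext i j
  simp only [Hmat, Amat, Bmat, bidiagonalAddLastRow, Matrix.sub_apply, Matrix.smul_apply,
    one_apply, map_apply, mul_apply, Fin.sum_univ_one, of_apply, smul_eq_mul, Fin.ext_iff]
  split_ifs <;> first | omega | (push_cast; ring)

/-- Sums reindexed by `j' = j - 1 : Fin n` and `p' = p - 1 ∈ range (j' + 1)`; the 1-based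
gain `K_{n+1-p}` is the 0-based entry `K 0 ⟨n - 1 - p'⟩`. -/
theorem stmt_1 (n : ℕ) (hn : 1 ≤ n) (τ : ℝ)
    (K : Matrix (Fin 1) (Fin n) ℝ) (lam : ℝ) (z : ℂ) :
    (z • (1 : Matrix (Fin n) (Fin n) ℂ) - (Hmat n τ lam K).map (Complex.ofReal ·)).det
      = z ^ n + ∑ j : Fin n,
          ((lam : ℂ) * ∑ p ∈ Finset.range ((j : ℕ) + 1),
              (-1 : ℂ) ^ ((j : ℕ) - p) * (τ : ℂ) ^ (p + 1) *
                ((K 0 ⟨n - 1 - p, by omega⟩ : ℝ) : ℂ) *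
                (Nat.choose (n - 1 - p) (n - 1 - (j : ℕ)) : ℂ)
            + (-1 : ℂ) ^ ((j : ℕ) + 1) * (Nat.choose n (n - 1 - (j : ℕ)) : ℂ)) *
            z ^ (n - 1 - (j : ℕ)) := by
  set k : ℕ → ℂ := fun i => if h : i < n then (lam * τ * K 0 ⟨i, h⟩ : ℝ) else 0
  have hk (i : Fin n) : k i = (lam * τ * K 0 i : ℝ) := dif_pos i.isLt
  rw [smul_one_sub_map_Hmat, det_bidiagonalAddLastRow]
  simp_rw [← hk]
  rw [Fin.sum_univ_eq_sum_range (fun i => k i * (τ : ℂ) ^ (n - 1 - i) * (z - 1) ^ i),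
    sum_mul_pow_mul_sub_one_pow, ← pow_add_sum_range_eq_sub_one_pow, add_assoc,
    ← sum_add_distrib, ← Fin.sum_univ_eq_sum_range]
  refine congrArg (_ + ·) (Fintype.sum_congr _ _ fun j => ?_)
  rw [← add_mul, mul_sum, add_comm]
  refine congrArg (fun s => (s + _) * _) (sum_congr rfl fun p _ => ?_)
  have hp : n - 1 - p < n := by omega
  rw [show k (n - 1 - p) = (lam * τ * K 0 ⟨n - 1 - p, hp⟩ : ℝ) from hk ⟨n - 1 - p, hp⟩]
  push_cast
  ring
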